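/- Let n be even with n ≡ 2 or 6 (mod 8), let l be an integer with 0 ≤ l ≤ (n−2)/4, and set k = n − 1 − l. Then for every state η̂ of Ω_n ⊗_max Ω_n and all i, j ∈ {0,…,n−1}, C[η̂; E_n(i),E_n(j); E_n(k),E_n(l)] ≤ 2 r_n² [cos((2l+1)θ_n) + cos θ_n · sin((2l+1)θ_n)]. -/

import Mathlib

noncomputable section

/-- Standard inner product on `ℝ³`. -/
def dot3 (v w : Fin 3 → ℝ) : ℝ := ∑ i, v i * w i

/-- The angle `θ_n = π / n`. -/
def thetaN (n : ℕ) : ℝ := Real.pi / n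

/-- `r_n = (cos θ_n)^{-1/2}`. -/
def rN (n : ℕ) : ℝ := Real.sqrt (Real.cos (thetaN n))⁻¹

/-- `R_n = 1 / (1 + r_n²)`. -/
def RN (n : ℕ) : ℝ := 1 / (1 + rN n ^ 2)

/-- The pure states `ω_n(i)` of the regular polygon theory. -/
def omegaN (n i : ℕ) : Fin 3 → ℝ :=
  ![rN n * Real.cos (2 * (i : ℝ) * thetaN n), rN n * Real.sin (2 * (i : ℝ) * thetaN n), 1]

/-- The state space `Ω_n`, the convex hull of the pure states. -/
def OmegaN (n : ℕ) : Set (Fin 3 → ℝ) :=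
  convexHull ℝ {v | ∃ i < n, v = omegaN n i}

/-- The unit effect `u = (0,0,1)`. -/
def uEff : Fin 3 → ℝ := ![0, 0, 1]

/-- The pure effects `e_n(i)` (separate formulas for even and odd `n`). -/
def eN (n i : ℕ) : Fin 3 → ℝ :=
  if Even n then
    (1 / 2 : ℝ) • ![rN n * Real.cos ((2 * (i : ℝ) + 1) * thetaN n),
                    rN n * Real.sin ((2 * (i : ℝ) + 1) * thetaN n), 1]
  else
    RN n • ![rN n * Real.cos (2 * (i : ℝ) * thetaN n),
             rN n * Real.sin (2 * (i : ℝ) * thetaN n), 1]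

/-- The complementary effect `ē_n(i) = u - e_n(i)`. -/
def eBarN (n i : ℕ) : Fin 3 → ℝ := uEff - eN n i

/-- The effect space `E_n`. -/
def EffN (n : ℕ) : Set (Fin 3 → ℝ) :=
  {f | ∀ ω ∈ OmegaN n, dot3 f ω ∈ Set.Icc (0 : ℝ) 1}

/-- The positive cone `V_{n+}` generated by the state space. -/
def VposN (n : ℕ) : Set (Fin 3 → ℝ) :=
  {x | ∃ c : ℝ, 0 ≤ c ∧ ∃ ω ∈ OmegaN n, x = c • ω}

/-- The dual cone `V*_{n+}` generated by the effect space. -/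
def VdualN (n : ℕ) : Set (Fin 3 → ℝ) :=
  {x | ∃ c : ℝ, 0 ≤ c ∧ ∃ f ∈ EffN n, x = c • f}

/-- A state of `Ω_n ⊗_max Ω_n`, identified with a normalized cone-preserving linear map. -/
def IsState (n : ℕ) (η : (Fin 3 → ℝ) →ₗ[ℝ] (Fin 3 → ℝ)) : Prop :=
  (∀ x ∈ VdualN n, η x ∈ VposN n) ∧ dot3 uEff (η uEff) = 1

/-- A binary observable on `Ω_n`: a pair of effects summing to the unit effect. -/
def IsObservable (n : ℕ) (A : (Fin 3 → ℝ) × (Fin 3 → ℝ)) : Prop :=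
  A.1 ∈ EffN n ∧ A.2 ∈ EffN n ∧ A.1 + A.2 = uEff

/-- The observable `E_n(i) = (e_n(i), ē_n(i))`. -/
def EObs (n i : ℕ) : (Fin 3 → ℝ) × (Fin 3 → ℝ) := (eN n i, eBarN n i)

/-- The correlator `E(st) = Σ_{a,b} (-1)^{a+b} ⟨B^b, η(A^a)⟩`. -/
def corr (η : (Fin 3 → ℝ) →ₗ[ℝ] (Fin 3 → ℝ)) (A B : (Fin 3 → ℝ) × (Fin 3 → ℝ)) : ℝ :=
  dot3 B.1 (η A.1) - dot3 B.2 (η A.1) - dot3 B.1 (η A.2) + dot3 B.2 (η A.2)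

/-- The CHSH value `C[η; A₀,A₁; B₀,B₁] = E(00) + E(01) + E(10) - E(11)`. -/
def CHSH (η : (Fin 3 → ℝ) →ₗ[ℝ] (Fin 3 → ℝ))
    (A0 A1 B0 B1 : (Fin 3 → ℝ) × (Fin 3 → ℝ)) : ℝ :=
  corr η A0 B0 + corr η A0 B1 + corr η A1 B0 - corr η A1 B1

/-- `GL(Ω_n)`: linear bijections of `ℝ³` preserving the state space. -/
def GLOmega (n : ℕ) : Set ((Fin 3 → ℝ) →ₗ[ℝ] (Fin 3 → ℝ)) :=
  {T | Function.Bijective T ∧ T '' OmegaN n = OmegaN n}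

/-- The order isomorphism `T_n`: a rotation by `θ_n` for even `n`, the identity for odd `n`. -/
def TN (n : ℕ) : (Fin 3 → ℝ) →ₗ[ℝ] (Fin 3 → ℝ) :=
  if Even n then
    Matrix.toLin' !![Real.cos (thetaN n), Real.sin (thetaN n), 0;
                     -Real.sin (thetaN n), Real.cos (thetaN n), 0;
                     0, 0, 1]
  else LinearMap.id

/-- Maximally entangled states: elements of `T_n · GL(Ω_n)`. -/
def MaxEnt (n : ℕ) (η : (Fin 3 → ℝ) →ₗ[ℝ] (Fin 3 → ℝ)) : Prop :=
  ∃ T ∈ GLOmega n, η = (TN n).comp T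


/-!
For even `n` the observable `E_n(a)` has `e_n(a) - ē_n(a) = r_n (cos α_a, sin α_a, 0)` with
`α_a = (2a+1)θ_n`, and `k = n-1-l` gives `α_k = 2π - α_l`. So the CHSH value collapses to
`2 r_n cos α_l · x_i - 2 r_n sin α_l · y_j`, where `(x_a, y_a, _)` is `η̂(e_n(a) - ē_n(a))`.
For `n ≡ 2 (mod 4)` the polygon `Ω_n` lies in the box `|x| ≤ r_n`, `|y| ≤ r_n cos θ_n` at
height `1`; since `η̂` maps `e_n(a)` and `ē_n(a)` into the cone over `Ω_n` with total height
`1`, this gives `|x_a| ≤ r_n` and `|y_a| ≤ r_n cos θ_n`. Finally `l ≤ (n-2)/4` puts `α_l` in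
`[0, π/2]`.
-/

open Real Set

lemma sin_mul_sin_succ_mul_pi_div_nonneg (N : ℕ) (k : ℤ) :
    0 ≤ sin (k * (π / N)) * sin ((k + 1) * (π / N)) := by
  rcases N.eq_zero_or_pos with rfl | hN
  · simp
  -- shifting `k` by `N` flips the sign of both factors, so we may assume `0 ≤ k < N`
  have hN' : (0 : ℤ) < N := by exact_mod_cast hN
  obtain ⟨s, t, hs0, hsN, rfl⟩ : ∃ s t : ℤ, 0 ≤ s ∧ s < N ∧ k = s + N * t :=
    ⟨k % N, k / N, Int.emod_nonneg k hN'.ne', Int.emod_lt_of_pos k hN',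
      (Int.emod_add_mul_ediv k N).symm⟩
  have hNθ : (N : ℝ) * (π / N) = π := mul_div_cancel₀ π (by positivity)
  have hshift (x : ℝ) : (x + N * t) * (π / N) = x * (π / N) + t * π := by
    rw [add_mul, mul_comm (N : ℝ), mul_assoc, hNθ]
  have hsin (x : ℝ) (hx0 : 0 ≤ x) (hxN : x ≤ N) : 0 ≤ sin (x * (π / N)) :=
    sin_nonneg_of_nonneg_of_le_pi (by positivity)
      ((mul_le_mul_of_nonneg_right hxN (by positivity)).trans hNθ.le)
  push_cast
  rw [add_right_comm, hshift, hshift, sin_add_int_mul_pi, sin_add_int_mul_pi,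
    mul_mul_mul_comm, ← mul_zpow, neg_one_mul, neg_neg, one_zpow, one_mul]
  have hs1 : s + 1 ≤ N := hsN
  exact mul_nonneg (hsin s (by exact_mod_cast hs0) (by exact_mod_cast hsN.le))
    (hsin (s + 1) (by positivity) (by exact_mod_cast hs1))

lemma cos_odd_mul_pi_div_le (N : ℕ) (k : ℤ) :
    cos ((2 * k + 1) * (π / N)) ≤ cos (π / N) := by
  have h := cos_sub_cos (π / N) ((2 * k + 1) * (π / N))
  rw [show (π / N + (2 * k + 1) * (π / N)) / 2 = (k + 1) * (π / N) by ring,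
    show (π / N - (2 * k + 1) * (π / N)) / 2 = -(k * (π / N)) by ring, sin_neg] at h
  nlinarith [sin_mul_sin_succ_mul_pi_div_nonneg N k]

lemma abs_cos_odd_mul_pi_div_le {N : ℕ} (hN : Even N) (k : ℤ) :
    |cos ((2 * k + 1) * (π / N))| ≤ cos (π / N) := by
  rcases N.eq_zero_or_pos with rfl | hN0
  · simp
  obtain ⟨m, hm⟩ := hN
  refine abs_le.2 ⟨?_, cos_odd_mul_pi_div_le N k⟩
  have h := cos_odd_mul_pi_div_le N (k + m)
  have hNθ : (N : ℝ) * (π / N) = π := mul_div_cancel₀ π (by positivity)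
  rw [show (2 * ((k + m : ℤ) : ℝ) + 1) * (π / N) = (2 * k + 1) * (π / N) + N * (π / N) by
    rw [hm]; push_cast; ring, hNθ, cos_add_pi] at h
  linarith

lemma abs_sin_even_mul_pi_div_le {N : ℕ} (hN : N % 4 = 2) (i : ℤ) :
    |sin (2 * i * (π / N))| ≤ cos (π / N) := by
  obtain ⟨p, hp⟩ : ∃ p : ℕ, N = 2 * (2 * p + 1) := ⟨N / 4, by omega⟩
  have h := abs_cos_odd_mul_pi_div_le (N := N) ⟨2 * p + 1, by omega⟩ (p - i)
  have hquarter : (2 * p + 1 : ℝ) * (π / N) = π / 2 := by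
    rw [hp]; push_cast; field_simp
  rwa [← sin_pi_div_two_sub, ← hquarter, show (2 * p + 1 : ℝ) * (π / N)
    - (2 * ((p - i : ℤ) : ℝ) + 1) * (π / N) = 2 * i * (π / N) by push_cast; ring] at h

lemma rN_sq_mul_cos_le_one (n : ℕ) : rN n ^ 2 * cos (thetaN n) ≤ 1 := by
  rcases le_or_gt (cos (thetaN n)) 0 with h | h
  · rw [rN, sqrt_eq_zero'.2 (inv_nonpos.2 h)]
    simp
  · rw [rN, sq_sqrt (inv_nonneg.2 h.le), inv_mul_cancel₀ h.ne']

lemma convex_abs_apply_le {ι : Type*} (k : ι) (a : ℝ) :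
    Convex ℝ {v : ι → ℝ | |v k| ≤ a} := by
  have h : {v : ι → ℝ | |v k| ≤ a} = (fun v => v k) ⁻¹' Icc (-a) a := by
    ext v
    simp [abs_le]
  rw [h]
  exact (convex_Icc (-a) a).is_linear_preimage (LinearMap.proj k).isLinear

lemma dot3_eq_dotProduct (v w : Fin 3 → ℝ) : dot3 v w = v ⬝ᵥ w := rfl

lemma corr_eq_dot3 (η : (Fin 3 → ℝ) →ₗ[ℝ] (Fin 3 → ℝ))
    (A B : (Fin 3 → ℝ) × (Fin 3 → ℝ)) :
    corr η A B = dot3 (B.1 - B.2) (η (A.1 - A.2)) := by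
  simp only [corr, dot3_eq_dotProduct, map_sub, sub_dotProduct, dotProduct_sub]
  ring

lemma CHSH_eq_dot3 (η : (Fin 3 → ℝ) →ₗ[ℝ] (Fin 3 → ℝ))
    (A0 A1 B0 B1 : (Fin 3 → ℝ) × (Fin 3 → ℝ)) :
    CHSH η A0 A1 B0 B1 = dot3 ((B0.1 - B0.2) + (B1.1 - B1.2)) (η (A0.1 - A0.2))
      + dot3 ((B0.1 - B0.2) - (B1.1 - B1.2)) (η (A1.1 - A1.2)) := by
  simp only [CHSH, corr_eq_dot3, dot3_eq_dotProduct, add_dotProduct, sub_dotProduct]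
  ring

section Polygon

variable {n : ℕ}

lemma OmegaN_subset {s : Set (Fin 3 → ℝ)} (hs : Convex ℝ s)
    (h : ∀ i < n, omegaN n i ∈ s) :
    OmegaN n ⊆ s :=
  convexHull_min (by rintro _ ⟨i, hi, rfl⟩; exact h i hi) hs

lemma apply_two_eq_one_of_mem_OmegaN {ω : Fin 3 → ℝ} (hω : ω ∈ OmegaN n) : ω 2 = 1 :=
  OmegaN_subset
    (convex_hyperplane (LinearMap.proj (R := ℝ) (φ := fun _ : Fin 3 => ℝ) 2).isLinear 1)
    (fun _ _ => rfl) hω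

lemma abs_apply_le_of_mem_OmegaN (hn : n % 4 = 2) {ω : Fin 3 → ℝ} (hω : ω ∈ OmegaN n) :
    |ω 0| ≤ rN n ∧ |ω 1| ≤ rN n * cos (thetaN n) := by
  have hr : 0 ≤ rN n := sqrt_nonneg _
  refine ⟨OmegaN_subset (convex_abs_apply_le 0 _) (fun i _ => ?_) hω,
    OmegaN_subset (convex_abs_apply_le 1 _) (fun i _ => ?_) hω⟩
  · simp only [omegaN, mem_ofPred_eq, Matrix.cons_val_zero, abs_mul, abs_of_nonneg hr]
    exact mul_le_of_le_one_right hr (abs_cos_le_one _)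
  · simp only [omegaN, mem_ofPred_eq, Matrix.cons_val_one, Matrix.cons_val_zero, abs_mul,
      abs_of_nonneg hr]
    gcongr
    exact_mod_cast abs_sin_even_mul_pi_div_le hn i

lemma abs_apply_le_of_mem_VposN (hn : n % 4 = 2) {v : Fin 3 → ℝ} (hv : v ∈ VposN n) :
    |v 0| ≤ rN n * v 2 ∧ |v 1| ≤ rN n * cos (thetaN n) * v 2 := by
  obtain ⟨c, hc, ω, hω, rfl⟩ := hv
  obtain ⟨h0, h1⟩ := abs_apply_le_of_mem_OmegaN hn hω
  simp only [Pi.smul_apply, smul_eq_mul, abs_mul, abs_of_nonneg hc,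
    apply_two_eq_one_of_mem_OmegaN hω, mul_one]
  exact ⟨by rw [mul_comm]; gcongr, by rw [mul_comm]; gcongr⟩

lemma mem_EffN_of_forall_omegaN {f : Fin 3 → ℝ}
    (h : ∀ i < n, dot3 f (omegaN n i) ∈ Icc 0 1) :
    f ∈ EffN n := fun _ hω =>
  OmegaN_subset (s := {ω | dot3 f ω ∈ Icc 0 1})
    ((convex_Icc 0 1).is_linear_preimage ⟨dotProduct_add f, fun c x => dotProduct_smul c f x⟩)
    h hω

lemma uEff_sub_mem_EffN {f : Fin 3 → ℝ} (hf : f ∈ EffN n) : uEff - f ∈ EffN n := by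
  intro ω hω
  have h : dot3 (uEff - f) ω = 1 - dot3 f ω := by
    simp [dot3, Fin.sum_univ_three, uEff, apply_two_eq_one_of_mem_OmegaN hω]
    ring
  obtain ⟨h0, h1⟩ := hf ω hω
  rw [h]
  exact ⟨by linarith, by linarith⟩

lemma dot3_eN_omegaN (hn : Even n) (i j : ℕ) :
    dot3 (eN n i) (omegaN n j) =
      (1 + rN n ^ 2 * cos ((2 * ((i : ℝ) - j) + 1) * thetaN n)) / 2 := by
  rw [show (2 * ((i : ℝ) - j) + 1) * thetaN n = (2 * i + 1) * thetaN n - 2 * j * thetaN n by ring,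
    cos_sub]
  simp [dot3, Fin.sum_univ_three, eN, omegaN, hn]
  ring

lemma eN_mem_EffN (hn : Even n) (i : ℕ) : eN n i ∈ EffN n := by
  refine mem_EffN_of_forall_omegaN fun j _ => ?_
  have hcos : |cos ((2 * ((i : ℝ) - j) + 1) * thetaN n)| ≤ cos (thetaN n) := by
    exact_mod_cast abs_cos_odd_mul_pi_div_le hn (i - j)
  have h : |rN n ^ 2 * cos ((2 * ((i : ℝ) - j) + 1) * thetaN n)| ≤ 1 := by
    rw [abs_mul, abs_sq]
    exact (mul_le_mul_of_nonneg_left hcos (sq_nonneg _)).trans (rN_sq_mul_cos_le_one n)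
  rw [dot3_eN_omegaN hn, mem_Icc]
  constructor <;> linarith [abs_le.1 h]

lemma isObservable_EObs (hn : Even n) (i : ℕ) : IsObservable n (EObs n i) :=
  ⟨eN_mem_EffN hn i, uEff_sub_mem_EffN (eN_mem_EffN hn i), add_sub_cancel _ _⟩

lemma IsState.abs_apply_sub_le (hn : n % 4 = 2) {η : (Fin 3 → ℝ) →ₗ[ℝ] (Fin 3 → ℝ)}
    (hη : IsState n η) {A : (Fin 3 → ℝ) × (Fin 3 → ℝ)} (hA : IsObservable n A) :
    |η (A.1 - A.2) 0| ≤ rN n ∧ |η (A.1 - A.2) 1| ≤ rN n * cos (thetaN n) := by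
  obtain ⟨hpos, hnorm⟩ := hη
  obtain ⟨h1, h2, hsum⟩ := hA
  have hmem (f : Fin 3 → ℝ) (hf : f ∈ EffN n) : η f ∈ VposN n :=
    hpos f ⟨1, zero_le_one, f, hf, (one_smul ℝ f).symm⟩
  obtain ⟨hp0, hp1⟩ := abs_apply_le_of_mem_VposN hn (hmem _ h1)
  obtain ⟨hq0, hq1⟩ := abs_apply_le_of_mem_VposN hn (hmem _ h2)
  have htot : η A.1 2 + η A.2 2 = 1 := by
    rw [← Pi.add_apply, ← map_add, hsum]
    simpa [dot3, Fin.sum_univ_three, uEff] using hnorm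
  rw [map_sub, Pi.sub_apply, Pi.sub_apply]
  constructor
  · calc |η A.1 0 - η A.2 0| ≤ |η A.1 0| + |η A.2 0| := abs_sub _ _
      _ ≤ rN n * η A.1 2 + rN n * η A.2 2 := add_le_add hp0 hq0
      _ = rN n := by rw [← mul_add, htot, mul_one]
  · calc |η A.1 1 - η A.2 1| ≤ |η A.1 1| + |η A.2 1| := abs_sub _ _
      _ ≤ rN n * cos (thetaN n) * η A.1 2 + rN n * cos (thetaN n) * η A.2 2 :=
        add_le_add hp1 hq1
      _ = rN n * cos (thetaN n) := by rw [← mul_add, htot, mul_one]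

lemma EObs_fst_sub_snd (hn : Even n) (a : ℕ) :
    (EObs n a).1 - (EObs n a).2 =
      ![rN n * cos ((2 * a + 1) * thetaN n), rN n * sin ((2 * a + 1) * thetaN n), 0] := by
  ext k
  fin_cases k <;> simp [EObs, eBarN, eN, hn, uEff] <;> ring

lemma odd_mul_thetaN_reflect {l : ℕ} (hl : l < n) :
    (2 * ((n - 1 - l : ℕ) : ℝ) + 1) * thetaN n = 2 * π - (2 * l + 1) * thetaN n := by
  have hn : (n : ℝ) ≠ 0 := by exact_mod_cast (show n ≠ 0 by omega)
  rw [Nat.cast_sub (by omega), Nat.cast_sub (by omega), thetaN]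
  field_simp
  push_cast
  ring

lemma odd_mul_thetaN_le_pi_div_two {l : ℕ} (hl : 4 * l + 2 ≤ n) :
    (2 * (l : ℝ) + 1) * thetaN n ≤ π / 2 := by
  have hl' : ((4 * l + 2 : ℕ) : ℝ) ≤ n := by exact_mod_cast hl
  have hn : (0 : ℝ) < n := by exact_mod_cast (show 0 < n by omega)
  rw [thetaN, ← mul_div_assoc, div_le_div_iff₀ hn two_pos]
  push_cast at hl'
  nlinarith [pi_pos]

lemma CHSH_EObs_reflect (hn : Even n) {l : ℕ} (hl : l < n)
    (η : (Fin 3 → ℝ) →ₗ[ℝ] (Fin 3 → ℝ)) (i j : ℕ) :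
    CHSH η (EObs n i) (EObs n j) (EObs n (n - 1 - l)) (EObs n l) =
      2 * rN n * cos ((2 * l + 1) * thetaN n) * η ((EObs n i).1 - (EObs n i).2) 0
        - 2 * rN n * sin ((2 * l + 1) * thetaN n) * η ((EObs n j).1 - (EObs n j).2) 1 := by
  rw [CHSH_eq_dot3, EObs_fst_sub_snd hn (n - 1 - l), EObs_fst_sub_snd hn l,
    odd_mul_thetaN_reflect hl, cos_two_pi_sub, sin_two_pi_sub]
  simp [dot3, Fin.sum_univ_three]
  ring

end Polygon

/-- for even `n ≡ 2, 6 (mod 8)`, `0 ≤ l ≤ (n−2)/4` and `k = n − 1 − l`,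
the CHSH value of any state with observables `E_n(i), E_n(j); E_n(k), E_n(l)` is bounded
by `2 r_n² [cos((2l+1)θ_n) + cos θ_n · sin((2l+1)θ_n)]`. -/
theorem CHSH_upper_bound_even (n : ℕ) (hmod : n % 8 = 2 ∨ n % 8 = 6)
    (l : ℕ) (hl : l ≤ (n - 2) / 4) :
    ∀ η : (Fin 3 → ℝ) →ₗ[ℝ] (Fin 3 → ℝ), IsState n η →
      ∀ i < n, ∀ j < n,
        CHSH η (EObs n i) (EObs n j) (EObs n (n - 1 - l)) (EObs n l) ≤
          2 * rN n ^ 2 * (Real.cos ((2 * (l : ℝ) + 1) * thetaN n)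
            + Real.cos (thetaN n) * Real.sin ((2 * (l : ℝ) + 1) * thetaN n)) := by
  rintro η hη i - j -
  have hn : n % 4 = 2 := by omega
  have hEven : Even n := Nat.even_iff.2 (by omega)
  have hα := odd_mul_thetaN_le_pi_div_two (n := n) (l := l) (by omega)
  have hα0 : 0 ≤ (2 * (l : ℝ) + 1) * thetaN n := by unfold thetaN; positivity
  have hcos : 0 ≤ cos ((2 * (l : ℝ) + 1) * thetaN n) :=
    cos_nonneg_of_mem_Icc ⟨by linarith [pi_pos], hα⟩
  have hsin : 0 ≤ sin ((2 * (l : ℝ) + 1) * thetaN n) :=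
    sin_nonneg_of_nonneg_of_le_pi hα0 (by linarith [pi_pos])
  have hr : 0 ≤ rN n := sqrt_nonneg _
  have hx := (hη.abs_apply_sub_le hn (isObservable_EObs hEven i)).1
  have hy := (hη.abs_apply_sub_le hn (isObservable_EObs hEven j)).2
  rw [CHSH_EObs_reflect hEven (by omega)]
  calc _ ≤ 2 * rN n * cos ((2 * l + 1) * thetaN n) * rN n
        + 2 * rN n * sin ((2 * l + 1) * thetaN n) * (rN n * cos (thetaN n)) := by
        rw [sub_eq_add_neg, ← mul_neg]
        gcongr
        exacts [(le_abs_self _).trans hx, (neg_le_abs _).trans hy]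
    _ = _ := by ring
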